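/- Let I be a real interval with [0,1] ⊆ I ⊆ ℝ₊ and let f : Iⁿ → ℝ be a nonconstant function. Then the following are equivalent: (i) f is a quasi-Lovász extension and there exists A ⊆ [n] such that f_0(1_A) ≠ 0; (ii) f is comonotonically modular (equivalently, invariant under horizontal min-differences) and f_0 is weakly homogeneous; (iii) there is a nondecreasing function φ_f : I → ℝ with φ_f(0) = 0 and φ_f(1) = 1 such that f = L_{f|_{{0,1}ⁿ}} ∘ φ_f, where L_{f|_{{0,1}ⁿ}} is the Lovász extension of the restriction of f to {0,1}ⁿ. -/

import Mathlib

open Finset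

/-- The indicator tuple `1_A` of a subset `A ⊆ [n]`. -/
def ind {n : ℕ} (A : Finset (Fin n)) : Fin n → ℝ := fun i => if i ∈ A then 1 else 0

/-- The Möbius transform of a pseudo-Boolean function (viewed as a set function). -/
def mobius {n : ℕ} (ψ : Finset (Fin n) → ℝ) (A : Finset (Fin n)) : ℝ :=
  ∑ B ∈ A.powerset, (-1 : ℝ) ^ (A.card - B.card) * ψ B

/-- `min_{i ∈ A} x i` (with value `0` for `A = ∅`). -/
def lovMinOn {n : ℕ} (A : Finset (Fin n)) (x : Fin n → ℝ) : ℝ :=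
  if h : A.Nonempty then A.inf' h x else 0

/-- The Lovász extension of a pseudo-Boolean function `ψ` (viewed as a set function):
`L_ψ(x) = a_ψ(∅) + Σ_{∅ ≠ A ⊆ [n]} a_ψ(A) · min_{i ∈ A} x_i`. -/
def Lov {n : ℕ} (ψ : Finset (Fin n) → ℝ) (x : Fin n → ℝ) : ℝ :=
  mobius ψ ∅ + ∑ A : Finset (Fin n), mobius ψ A * lovMinOn A x

/-- `x ∈ ℝⁿ_σ`, i.e. `x_{σ(1)} ≤ ⋯ ≤ x_{σ(n)}`. -/
def inRσ {n : ℕ} (σ : Equiv.Perm (Fin n)) (x : Fin n → ℝ) : Prop :=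
  ∀ i j : Fin n, i ≤ j → x (σ i) ≤ x (σ j)

/-- `A_σ^↑(k) = {σ(j) : j ≥ k}` (0-indexed; `Aup σ n = ∅`). -/
def Aup {n : ℕ} (σ : Equiv.Perm (Fin n)) (k : ℕ) : Finset (Fin n) :=
  (Finset.univ.filter fun j : Fin n => k ≤ (j : ℕ)).image σ

/-- `A_σ^↓(k) = {σ(j) : j < k}` (0-indexed; `Adown σ 0 = ∅`). -/
def Adown {n : ℕ} (σ : Equiv.Perm (Fin n)) (k : ℕ) : Finset (Fin n) :=
  (Finset.univ.filter fun j : Fin n => (j : ℕ) < k).image σ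

/-- `f` is comonotonically modular on `Iⁿ`:
`f(x) + f(x′) = f(x ∧ x′) + f(x ∨ x′)` for all comonotonic `x, x′ ∈ Iⁿ`. -/
def ComonModular {n : ℕ} (I : Set ℝ) (f : (Fin n → ℝ) → ℝ) : Prop :=
  ∀ σ : Equiv.Perm (Fin n), ∀ x y : Fin n → ℝ,
    (∀ i, x i ∈ I) → (∀ i, y i ∈ I) → inRσ σ x → inRσ σ y →
    f x + f y = f (fun i => min (x i) (y i)) + f (fun i => max (x i) (y i))

/-- `f` is invariant under horizontal min-differences on `Iⁿ` (`I ⊆ ℝ₊`). -/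
def InvHMin {n : ℕ} (I : Set ℝ) (f : (Fin n → ℝ) → ℝ) : Prop :=
  ∀ x : Fin n → ℝ, (∀ i, x i ∈ I) → ∀ c ∈ I,
    f x - f (fun i => min (x i) c) =
      f (fun i => if x i ≤ c then 0 else x i) -
      f (fun i => min (if x i ≤ c then 0 else x i) c)

/-- Weak homogeneity of `h : Iⁿ → ℝ` for `I ⊆ ℝ₊`. -/
def WeaklyHomPos {n : ℕ} (I : Set ℝ) (h : (Fin n → ℝ) → ℝ) : Prop :=
  ∃ χ : ℝ → ℝ, MonotoneOn χ I ∧ χ 0 = 0 ∧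
    ∀ x ∈ I, ∀ A : Finset (Fin n), h (fun i => x * ind A i) = χ x * h (ind A)

/-- `f : Iⁿ → ℝ` is a quasi-Lovász extension: `f = L ∘ φ` for a Lovász extension `L` and a
nondecreasing `φ : I → ℝ` with `φ(0) = 0`. -/
def IsQLE {n : ℕ} (I : Set ℝ) (f : (Fin n → ℝ) → ℝ) : Prop :=
  ∃ ψ : Finset (Fin n) → ℝ, ∃ φ : ℝ → ℝ, MonotoneOn φ I ∧ φ 0 = 0 ∧
    ∀ x : Fin n → ℝ, (∀ i, x i ∈ I) → f x = Lov ψ (fun i => φ (x i))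

/-!
A Lovász extension is comonotonically modular, hence so is `L ∘ φ` for nondecreasing `φ`, and on
`Iⁿ ⊆ ℝ₊ⁿ` comonotonic modularity implies invariance under horizontal min-differences. A function
with the latter property is determined by its values on the tuples `t · 1_A`: cutting `x` at its
least positive entry `c` strictly shrinks the support, while `x ∧ c` and `[x]_c ∧ c` are multiples
of indicators. Weak homogeneity of `f_0` with `χ` says precisely that `f` and `L_{f|{0,1}ⁿ} ∘ χ`
agree on these tuples, and nonconstancy of `f` forces `χ 1 = 1`.
-/

section Mobius

variable {n : ℕ}

@[simp]
lemma mobius_empty (ψ : Finset (Fin n) → ℝ) : mobius ψ ∅ = ψ ∅ := by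
  simp [mobius]

lemma sum_Icc_neg_one_pow_card_sub {B S : Finset (Fin n)} (hBS : B ⊆ S) :
    ∑ A ∈ Icc B S, (-1 : ℝ) ^ (#A - #B) = if B = S then 1 else 0 := by
  have hinj : ∀ C ∈ (S \ B).powerset, ∀ D ∈ (S \ B).powerset, B ∪ C = B ∪ D → C = D := by
    intro C hC D hD h
    rw [← union_sdiff_cancel_left (disjoint_of_subset_right (mem_powerset.1 hC) disjoint_sdiff),
      h, union_sdiff_cancel_left (disjoint_of_subset_right (mem_powerset.1 hD) disjoint_sdiff)]
  rw [Icc_eq_image_powerset hBS, sum_image hinj]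
  have hcard : ∀ C ∈ (S \ B).powerset, (-1 : ℝ) ^ (#(B ∪ C) - #B) = (-1) ^ #C := by
    intro C hC
    rw [card_union_of_disjoint (disjoint_of_subset_right (mem_powerset.1 hC) disjoint_sdiff),
      Nat.add_sub_cancel_left]
  have halt := congrArg (Int.cast : ℤ → ℝ) (sum_powerset_neg_one_pow_card (x := S \ B))
  push_cast at halt
  rw [sum_congr rfl hcard, halt]
  simp only [sdiff_eq_empty_iff_subset]
  simp only [subset_antisymm_iff, hBS, true_and]

lemma sum_powerset_mobius (ψ : Finset (Fin n) → ℝ) (S : Finset (Fin n)) :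
    ∑ A ∈ S.powerset, mobius ψ A = ψ S := by
  unfold mobius
  rw [sum_comm' (t' := S.powerset) (s' := fun B => Icc B S)
    fun A B => by
      simp only [mem_powerset, mem_Icc]
      exact ⟨fun h => ⟨⟨h.2, h.1⟩, h.2.trans h.1⟩, fun h => ⟨h.1.2, h.1.1⟩⟩]
  simp_rw [← sum_mul]
  rw [sum_congr rfl fun B hB => by rw [sum_Icc_neg_one_pow_card_sub (mem_powerset.1 hB)]]
  simp [ite_mul]

end Mobius

section Lovasz

variable {n : ℕ}

lemma lovMinOn_eq_of_forall_le {A : Finset (Fin n)} {x : Fin n → ℝ} {k : Fin n} (hk : k ∈ A)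
    (hmin : ∀ i ∈ A, x k ≤ x i) : lovMinOn A x = x k := by
  rw [lovMinOn, dif_pos ⟨k, hk⟩]
  exact le_antisymm (inf'_le _ hk) (le_inf' _ _ hmin)

lemma lovMinOn_smul_ind {c : ℝ} (hc : 0 ≤ c) (A B : Finset (Fin n)) :
    lovMinOn B (fun i => c * ind A i) = if B.Nonempty ∧ B ⊆ A then c else 0 := by
  rcases B.eq_empty_or_nonempty with rfl | ⟨k, hk⟩
  · simp [lovMinOn]
  by_cases hBA : B ⊆ A
  · rw [if_pos ⟨⟨k, hk⟩, hBA⟩,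
      lovMinOn_eq_of_forall_le hk fun i hi => by simp [ind, hBA hi, hBA hk]]
    simp [ind, hBA hk]
  · obtain ⟨j, hj, hjA⟩ := not_subset.1 hBA
    rw [if_neg fun h => hBA h.2, lovMinOn_eq_of_forall_le hj fun i _ => by
      unfold ind; split_ifs <;> simp [hc]]
    simp [ind, hjA]

/-- For tuples sorted by the same permutation `σ`, the minimum over `A` is attained at the same
index `σ (min σ⁻¹(A))`. -/
lemma exists_mem_forall_le_of_inRσ {σ : Equiv.Perm (Fin n)} {A : Finset (Fin n)}
    (hA : A.Nonempty) : ∃ k ∈ A, ∀ z : Fin n → ℝ, inRσ σ z → ∀ i ∈ A, z k ≤ z i := by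
  obtain ⟨a, ha, hmin⟩ := exists_min_image A σ.symm hA
  refine ⟨a, ha, fun z hz i hi => ?_⟩
  simpa using hz _ _ (hmin i hi)

lemma lovMinOn_add_of_inRσ {σ : Equiv.Perm (Fin n)} {x y : Fin n → ℝ}
    (hx : inRσ σ x) (hy : inRσ σ y) (A : Finset (Fin n)) :
    lovMinOn A x + lovMinOn A y =
      lovMinOn A (fun i => min (x i) (y i)) + lovMinOn A (fun i => max (x i) (y i)) := by
  rcases A.eq_empty_or_nonempty with rfl | hA
  · simp [lovMinOn]
  obtain ⟨k, hk, hcommon⟩ := exists_mem_forall_le_of_inRσ (σ := σ) hA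
  have hxk := hcommon x hx
  have hyk := hcommon y hy
  rw [lovMinOn_eq_of_forall_le hk hxk, lovMinOn_eq_of_forall_le hk hyk,
    lovMinOn_eq_of_forall_le hk fun i hi => min_le_min (hxk i hi) (hyk i hi),
    lovMinOn_eq_of_forall_le hk fun i hi => max_le_max (hxk i hi) (hyk i hi)]
  exact (min_add_max _ _).symm

lemma lov_smul_ind (ψ : Finset (Fin n) → ℝ) {c : ℝ} (hc : 0 ≤ c) (A : Finset (Fin n)) :
    Lov ψ (fun i => c * ind A i) = ψ ∅ + c * (ψ A - ψ ∅) := by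
  have hsum : ∑ B ∈ A.powerset.erase ∅, mobius ψ B = ψ A - ψ ∅ := by
    rw [← sum_powerset_mobius ψ A, ← sum_erase_add _ _ (empty_mem_powerset A), mobius_empty]
    ring
  have hfilter :
      univ.filter (fun B : Finset (Fin n) => B.Nonempty ∧ B ⊆ A) = A.powerset.erase ∅ := by
    ext B
    simp [nonempty_iff_ne_empty]
  simp only [Lov, mobius_empty, lovMinOn_smul_ind hc, mul_ite, mul_zero, ← sum_filter, hfilter,
    ← sum_mul, hsum]
  ring

lemma comonModular_lov (ψ : Finset (Fin n) → ℝ) : ComonModular Set.univ (Lov ψ) := by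
  intro σ x y _ _ hx hy
  simp only [Lov]
  have hsum := sum_congr rfl fun A (_ : A ∈ univ) =>
    congrArg (mobius ψ A * ·) (lovMinOn_add_of_inRσ hx hy A)
  simp only [mul_add, sum_add_distrib] at hsum
  linarith

end Lovasz

section Comonotone

variable {n : ℕ} {I : Set ℝ}

lemma inRσ_sort (x : Fin n → ℝ) : inRσ (Tuple.sort x) x :=
  fun _ _ hij => Tuple.monotone_sort x hij

lemma inRσ.comp_monotoneOn {σ : Equiv.Perm (Fin n)} {x : Fin n → ℝ} {φ : ℝ → ℝ}
    (hx : inRσ σ x) (hxI : ∀ i, x i ∈ I) (hφ : MonotoneOn φ I) : inRσ σ (fun i => φ (x i)) :=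
  fun i j hij => hφ (hxI _) (hxI _) (hx i j hij)

lemma MonotoneOn.map_min_of_mem {φ : ℝ → ℝ} (hφ : MonotoneOn φ I) {a b : ℝ} (ha : a ∈ I)
    (hb : b ∈ I) : φ (min a b) = min (φ a) (φ b) := by
  rcases le_total a b with h | h
  · rw [min_eq_left h, min_eq_left (hφ ha hb h)]
  · rw [min_eq_right h, min_eq_right (hφ hb ha h)]

lemma MonotoneOn.map_max_of_mem {φ : ℝ → ℝ} (hφ : MonotoneOn φ I) {a b : ℝ} (ha : a ∈ I)
    (hb : b ∈ I) : φ (max a b) = max (φ a) (φ b) := by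
  rcases le_total a b with h | h
  · rw [max_eq_right h, max_eq_right (hφ ha hb h)]
  · rw [max_eq_left h, max_eq_left (hφ hb ha h)]

lemma ComonModular.comp_monotoneOn {g : (Fin n → ℝ) → ℝ} (hg : ComonModular Set.univ g)
    {φ : ℝ → ℝ} (hφ : MonotoneOn φ I) : ComonModular I (fun x => g (fun i => φ (x i))) := by
  intro σ x y hxI hyI hx hy
  simp only [hφ.map_min_of_mem (hxI _) (hyI _), hφ.map_max_of_mem (hxI _) (hyI _)]
  exact hg σ _ _ (fun _ => trivial) (fun _ => trivial) (hx.comp_monotoneOn hxI hφ)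
    (hy.comp_monotoneOn hyI hφ)

lemma ComonModular.of_eqOn {f g : (Fin n → ℝ) → ℝ} (hg : ComonModular I g)
    (hfg : ∀ x : Fin n → ℝ, (∀ i, x i ∈ I) → f x = g x) : ComonModular I f := by
  intro σ x y hxI hyI hx hy
  rw [hfg x hxI, hfg y hyI, hfg _ fun i => min_rec' (· ∈ I) (hxI i) (hyI i),
    hfg _ fun i => max_rec' (· ∈ I) (hxI i) (hyI i)]
  exact hg σ x y hxI hyI hx hy

/-- The cut `[x]_c` and the truncation `x ∧ c` are comonotonic, with `[x]_c ∨ (x ∧ c) = x` and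
`[x]_c ∧ (x ∧ c) = [x]_c ∧ c`. -/
lemma ComonModular.invHMin (h0 : (0 : ℝ) ∈ I) (hIpos : I ⊆ Set.Ici 0)
    {f : (Fin n → ℝ) → ℝ} (hf : ComonModular I f) : InvHMin I f := by
  intro x hxI c hcI
  have hc : 0 ≤ c := hIpos hcI
  have hx0 : ∀ i, 0 ≤ x i := fun i => hIpos (hxI i)
  have hcut : MonotoneOn (fun t : ℝ => if t ≤ c then 0 else t) I := by
    intro a ha b _ hab
    dsimp only
    split_ifs <;> linarith [hIpos ha]
  have hmod := hf (Tuple.sort x) (fun i => if x i ≤ c then 0 else x i) (fun i => min (x i) c)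
    (fun i => by split_ifs; exacts [h0, hxI i])
    (fun i => min_rec' (· ∈ I) (hxI i) hcI)
    ((inRσ_sort x).comp_monotoneOn hxI hcut)
    ((inRσ_sort x).comp_monotoneOn hxI fun _ _ _ _ hab => min_le_min_right c hab)
  have hmin : (fun i => min (if x i ≤ c then 0 else x i) (min (x i) c))
      = fun i => min (if x i ≤ c then 0 else x i) c := by
    funext i
    split_ifs with h
    · simp [hx0 i, hc]
    · rw [min_eq_right (min_le_left _ _)]
  have hmax : (fun i => max (if x i ≤ c then 0 else x i) (min (x i) c)) = x := by
    funext i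
    split_ifs with h
    · simp [min_eq_left h, hx0 i]
    · simp [le_of_not_ge h]
  rw [hmin, hmax] at hmod
  linarith

end Comonotone

section Uniqueness

variable {n : ℕ} {I : Set ℝ}

lemma invHMin_const (κ : ℝ) : InvHMin I (fun _ : Fin n → ℝ => κ) :=
  fun _ _ _ _ => by ring

lemma InvHMin.sub {f g : (Fin n → ℝ) → ℝ} (hf : InvHMin I f) (hg : InvHMin I g) :
    InvHMin I (fun x => f x - g x) := fun x hxI c hcI => by
  linear_combination hf x hxI c hcI - hg x hxI c hcI

lemma InvHMin.eq_zero_of_smul_ind (h0 : (0 : ℝ) ∈ I) (hIpos : I ⊆ Set.Ici 0)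
    {h : (Fin n → ℝ) → ℝ} (hh : InvHMin I h)
    (hind : ∀ t ∈ I, ∀ A : Finset (Fin n), h (fun i => t * ind A i) = 0)
    {x : Fin n → ℝ} (hxI : ∀ i, x i ∈ I) : h x = 0 := by
  induction hm : #(univ.filter fun i => 0 < x i) using Nat.strong_induction_on generalizing x
    with | _ m IH =>
  have hx0 : ∀ i, 0 ≤ x i := fun i => hIpos (hxI i)
  rcases (univ.filter fun i => 0 < x i).eq_empty_or_nonempty with hS | hS
  · have hx : x = fun i => 0 * ind ∅ i := by
      funext i
      have : ¬ 0 < x i := filter_eq_empty_iff.1 hS (mem_univ i)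
      simp only [zero_mul]
      linarith [hx0 i]
    rw [hx, hind 0 h0]
  obtain ⟨i₀, hi₀, hmin⟩ := exists_min_image _ x hS
  set c := x i₀
  have hc : 0 < c := (mem_filter.1 hi₀).2
  have htrunc : (fun i => min (x i) c) = fun i => c * ind (univ.filter fun i => 0 < x i) i := by
    funext i
    by_cases hi : 0 < x i
    · simp [ind, hi, hmin i (by simp [hi])]
    · simp [ind, le_antisymm (not_lt.1 hi) (hx0 i), hc.le]
  have hcut : (fun i => min (if x i ≤ c then 0 else x i) c)
      = fun i => c * ind (univ.filter fun i => c < x i) i := by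
    funext i
    by_cases hi : x i ≤ c
    · simp [ind, hi, hc.le]
    · simp [ind, hi, (not_le.1 hi).le]
  have hsupp : (univ.filter fun i => 0 < if x i ≤ c then 0 else x i)
      = univ.filter fun i => c < x i := by
    ext i
    by_cases hi : x i ≤ c
    · simp [hi]
    · simp [hi, not_le.1 hi, hc.trans (not_le.1 hi)]
  have hlt : #(univ.filter fun i => c < x i) < m := by
    rw [← hm]
    refine card_lt_card ⟨fun i hi => ?_, fun hsub => ?_⟩
    · simp only [mem_filter, mem_univ, true_and] at hi ⊢
      exact hc.trans hi
    · simpa [c] using hsub hi₀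
  have hcutI : ∀ i, (if x i ≤ c then 0 else x i) ∈ I := fun i => by
    split_ifs
    exacts [h0, hxI i]
  have hmd := hh x hxI c (hxI i₀)
  rw [htrunc, hcut, hind c (hxI i₀), hind c (hxI i₀), IH _ hlt hcutI (congrArg card hsupp)] at hmd
  linarith

lemma InvHMin.eqOn_of_smul_ind (h0 : (0 : ℝ) ∈ I) (hIpos : I ⊆ Set.Ici 0)
    {f g : (Fin n → ℝ) → ℝ} (hf : InvHMin I f) (hg : InvHMin I g)
    (hind : ∀ t ∈ I, ∀ A : Finset (Fin n),
      f (fun i => t * ind A i) = g (fun i => t * ind A i))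
    {x : Fin n → ℝ} (hxI : ∀ i, x i ∈ I) : f x = g x :=
  sub_eq_zero.1 <| (hf.sub hg).eq_zero_of_smul_ind h0 hIpos
    (fun t ht A => sub_eq_zero.2 (hind t ht A)) hxI

end Uniqueness

section Characterization

variable {n : ℕ} {I : Set ℝ} {f : (Fin n → ℝ) → ℝ}

lemma smul_ind_mem (h0 : (0 : ℝ) ∈ I) {t : ℝ} (ht : t ∈ I) (A : Finset (Fin n)) (i : Fin n) :
    t * ind A i ∈ I := by
  unfold ind
  split_ifs <;> simpa

lemma comp_smul_ind {φ : ℝ → ℝ} (hφ0 : φ 0 = 0) (t : ℝ) (A : Finset (Fin n)) :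
    (fun i => φ (t * ind A i)) = fun i => φ t * ind A i := by
  funext i
  unfold ind
  split_ifs <;> simp [hφ0]

lemma IsQLE.comonModular (hf : IsQLE I f) : ComonModular I f := by
  obtain ⟨ψ, φ, hφ, -, hfψ⟩ := hf
  exact ((comonModular_lov ψ).comp_monotoneOn hφ).of_eqOn hfψ

lemma sub_apply_zero_of_eq_lov_comp (h0 : (0 : ℝ) ∈ I) (hIpos : I ⊆ Set.Ici 0)
    {ψ : Finset (Fin n) → ℝ} {φ : ℝ → ℝ} (hφ : MonotoneOn φ I) (hφ0 : φ 0 = 0)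
    (hf : ∀ x : Fin n → ℝ, (∀ i, x i ∈ I) → f x = Lov ψ (fun i => φ (x i)))
    {t : ℝ} (ht : t ∈ I) (A : Finset (Fin n)) :
    f (fun i => t * ind A i) - f (fun _ => 0) = φ t * (ψ A - ψ ∅) := by
  have happly : ∀ t ∈ I, ∀ A : Finset (Fin n),
      f (fun i => t * ind A i) = ψ ∅ + φ t * (ψ A - ψ ∅) := fun t ht A => by
    rw [hf _ (smul_ind_mem h0 ht A), comp_smul_ind hφ0, lov_smul_ind ψ (hφ0 ▸ hφ h0 ht (hIpos ht))]
  have hzero := happly 0 h0 ∅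
  simp only [zero_mul, hφ0] at hzero
  rw [happly t ht A, hzero]
  ring

lemma weaklyHomPos_of_eq_lov_comp (h0 : (0 : ℝ) ∈ I) (h1 : (1 : ℝ) ∈ I)
    (hIpos : I ⊆ Set.Ici 0) {ψ : Finset (Fin n) → ℝ} {φ : ℝ → ℝ} (hφ : MonotoneOn φ I)
    (hφ0 : φ 0 = 0) (hφ1 : 0 < φ 1)
    (hf : ∀ x : Fin n → ℝ, (∀ i, x i ∈ I) → f x = Lov ψ (fun i => φ (x i))) :
    WeaklyHomPos I (fun y => f y - f (fun _ => 0)) := by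
  refine ⟨fun t => φ t / φ 1, fun a ha b hb hab => div_le_div_of_nonneg_right (hφ ha hb hab)
    hφ1.le, by simp [hφ0], fun t ht A => ?_⟩
  have h1A := sub_apply_zero_of_eq_lov_comp h0 hIpos hφ hφ0 hf h1 A
  simp only [one_mul] at h1A
  simp only [h1A, sub_apply_zero_of_eq_lov_comp h0 hIpos hφ hφ0 hf ht A]
  field_simp

lemma IsQLE.comonModular_and_weaklyHomPos (h0 : (0 : ℝ) ∈ I) (h1 : (1 : ℝ) ∈ I)
    (hIpos : I ⊆ Set.Ici 0) (hf : IsQLE I f)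
    (hA : ∃ A : Finset (Fin n), f (ind A) - f (fun _ => 0) ≠ 0) :
    ComonModular I f ∧ WeaklyHomPos I (fun y => f y - f (fun _ => 0)) := by
  refine ⟨hf.comonModular, ?_⟩
  obtain ⟨ψ, φ, hφ, hφ0, hfψ⟩ := hf
  obtain ⟨A, hA⟩ := hA
  have hφ1 : φ 1 ≠ 0 := fun h => hA <| by
    simpa [h] using sub_apply_zero_of_eq_lov_comp h0 hIpos hφ hφ0 hfψ h1 A
  exact weaklyHomPos_of_eq_lov_comp h0 h1 hIpos hφ hφ0
    ((hφ0 ▸ hφ h0 h1 zero_le_one).lt_of_ne' hφ1) hfψ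

lemma comonModular_and_weaklyHomPos_of_exists_eq_lov_comp (h0 : (0 : ℝ) ∈ I)
    (h1 : (1 : ℝ) ∈ I) (hIpos : I ⊆ Set.Ici 0)
    (hf : ∃ φf : ℝ → ℝ, MonotoneOn φf I ∧ φf 0 = 0 ∧ φf 1 = 1 ∧
      ∀ x : Fin n → ℝ, (∀ i, x i ∈ I) → f x = Lov (fun A => f (ind A)) (fun i => φf (x i))) :
    ComonModular I f ∧ WeaklyHomPos I (fun y => f y - f (fun _ => 0)) := by
  obtain ⟨φ, hφ, hφ0, hφ1, hfφ⟩ := hf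
  exact ⟨IsQLE.comonModular ⟨_, φ, hφ, hφ0, hfφ⟩,
    weaklyHomPos_of_eq_lov_comp h0 h1 hIpos hφ hφ0 (hφ1.symm ▸ one_pos) hfφ⟩

lemma exists_ind_ne_of_invHMin (h0 : (0 : ℝ) ∈ I) (hIpos : I ⊆ Set.Ici 0)
    (hnc : ∃ x y : Fin n → ℝ, (∀ i, x i ∈ I) ∧ (∀ i, y i ∈ I) ∧ f x ≠ f y)
    (hf : InvHMin I f) (hwh : WeaklyHomPos I (fun y => f y - f (fun _ => 0))) :
    ∃ A : Finset (Fin n), f (ind A) - f (fun _ => 0) ≠ 0 := by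
  by_contra! hA
  obtain ⟨χ, -, -, hχ⟩ := hwh
  have hconst : ∀ z : Fin n → ℝ, (∀ i, z i ∈ I) → f z = f (fun _ => 0) := fun z hz =>
    hf.eqOn_of_smul_ind h0 hIpos (invHMin_const _) (fun t ht A => by
      linear_combination hχ t ht A + χ t * hA A) hz
  obtain ⟨x, y, hxI, hyI, hxy⟩ := hnc
  exact hxy ((hconst x hxI).trans (hconst y hyI).symm)

lemma exists_eq_lov_comp_of_invHMin (h0 : (0 : ℝ) ∈ I) (h1 : (1 : ℝ) ∈ I)
    (hIpos : I ⊆ Set.Ici 0)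
    (hnc : ∃ x y : Fin n → ℝ, (∀ i, x i ∈ I) ∧ (∀ i, y i ∈ I) ∧ f x ≠ f y)
    (hf : InvHMin I f) (hwh : WeaklyHomPos I (fun y => f y - f (fun _ => 0))) :
    ∃ φf : ℝ → ℝ, MonotoneOn φf I ∧ φf 0 = 0 ∧ φf 1 = 1 ∧
      ∀ x : Fin n → ℝ, (∀ i, x i ∈ I) → f x = Lov (fun A => f (ind A)) (fun i => φf (x i)) := by
  obtain ⟨A, hA⟩ := exists_ind_ne_of_invHMin h0 hIpos hnc hf hwh
  obtain ⟨χ, hχ, hχ0, hfχ⟩ := hwh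
  refine ⟨χ, hχ, hχ0, ?_, fun x hx => hf.eqOn_of_smul_ind h0 hIpos
    (((comonModular_lov _).comp_monotoneOn hχ).invHMin h0 hIpos) (fun t ht B => ?_) hx⟩
  · have h1A := hfχ 1 h1 A
    simp only [one_mul] at h1A
    exact (mul_eq_right₀ hA).1 h1A.symm
  · have hind_empty : ind (∅ : Finset (Fin n)) = fun _ => 0 := by
      funext i
      simp [ind]
    simp only [comp_smul_ind hχ0, lov_smul_ind _ (hχ0 ▸ hχ h0 ht (hIpos ht)), hind_empty]
    linear_combination hfχ t ht B

end Characterization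

theorem stmt14_general {n : ℕ} (I : Set ℝ)
    (hI1 : Set.Icc (0 : ℝ) 1 ⊆ I) (hIpos : I ⊆ Set.Ici (0 : ℝ))
    (f : (Fin n → ℝ) → ℝ)
    (hnc : ∃ x y : Fin n → ℝ, (∀ i, x i ∈ I) ∧ (∀ i, y i ∈ I) ∧ f x ≠ f y) :
    ((IsQLE I f ∧ ∃ A : Finset (Fin n), f (ind A) - f (fun _ => 0) ≠ 0) ↔
       (ComonModular I f ∧ WeaklyHomPos I (fun y => f y - f (fun _ => 0)))) ∧
    ((ComonModular I f ∧ WeaklyHomPos I (fun y => f y - f (fun _ => 0))) ↔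
       (InvHMin I f ∧ WeaklyHomPos I (fun y => f y - f (fun _ => 0)))) ∧
    ((ComonModular I f ∧ WeaklyHomPos I (fun y => f y - f (fun _ => 0))) ↔
       ∃ φf : ℝ → ℝ, MonotoneOn φf I ∧ φf 0 = 0 ∧ φf 1 = 1 ∧
         ∀ x : Fin n → ℝ, (∀ i, x i ∈ I) →
           f x = Lov (fun A => f (ind A)) (fun i => φf (x i))) := by
  have h0 : (0 : ℝ) ∈ I := hI1 ⟨le_rfl, zero_le_one⟩
  have h1 : (1 : ℝ) ∈ I := hI1 ⟨zero_le_one, le_rfl⟩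
  have ii_ii' := fun hf : ComonModular I f => hf.invHMin h0 hIpos
  have ii'_iii := exists_eq_lov_comp_of_invHMin h0 h1 hIpos hnc
  have iii_ii := comonModular_and_weaklyHomPos_of_exists_eq_lov_comp (f := f) h0 h1 hIpos
  refine ⟨⟨fun ⟨hq, hA⟩ => hq.comonModular_and_weaklyHomPos h0 h1 hIpos hA, fun ⟨hcm, hw⟩ => ?_⟩,
    ⟨fun ⟨hcm, hw⟩ => ⟨ii_ii' hcm, hw⟩, fun ⟨hinv, hw⟩ => iii_ii (ii'_iii hinv hw)⟩,
    ⟨fun ⟨hcm, hw⟩ => ii'_iii (ii_ii' hcm) hw, iii_ii⟩⟩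
  obtain ⟨φ, hφ, hφ0, -, hfφ⟩ := ii'_iii (ii_ii' hcm) hw
  exact ⟨⟨_, φ, hφ, hφ0, hfφ⟩, exists_ind_ne_of_invHMin h0 hIpos hnc (ii_ii' hcm) hw⟩

/-- For `[0,1] ⊆ I ⊆ ℝ₊` and a nonconstant `f : Iⁿ → ℝ`, TFAE:
(i) `f` is a quasi-Lovász extension and `f_0(1_A) ≠ 0` for some `A`;
(ii) `f` is comonotonically modular (equivalently, invariant under horizontal
min-differences) and `f_0` is weakly homogeneous;
(iii) there is a nondecreasing `φ_f : I → ℝ` with `φ_f(0) = 0`, `φ_f(1) = 1` and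
`f = L_{f|_{{0,1}ⁿ}} ∘ φ_f`. -/
theorem stmt14 {n : ℕ} (I : Set ℝ) (hI : I.OrdConnected)
    (hI1 : Set.Icc (0 : ℝ) 1 ⊆ I) (hIpos : I ⊆ Set.Ici (0 : ℝ))
    (f : (Fin n → ℝ) → ℝ)
    (hnc : ∃ x y : Fin n → ℝ, (∀ i, x i ∈ I) ∧ (∀ i, y i ∈ I) ∧ f x ≠ f y) :
    ((IsQLE I f ∧ ∃ A : Finset (Fin n), f (ind A) - f (fun _ => 0) ≠ 0) ↔
       (ComonModular I f ∧ WeaklyHomPos I (fun y => f y - f (fun _ => 0)))) ∧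
    ((ComonModular I f ∧ WeaklyHomPos I (fun y => f y - f (fun _ => 0))) ↔
       (InvHMin I f ∧ WeaklyHomPos I (fun y => f y - f (fun _ => 0)))) ∧
    ((ComonModular I f ∧ WeaklyHomPos I (fun y => f y - f (fun _ => 0))) ↔
       ∃ φf : ℝ → ℝ, MonotoneOn φf I ∧ φf 0 = 0 ∧ φf 1 = 1 ∧
         ∀ x : Fin n → ℝ, (∀ i, x i ∈ I) →
           f x = Lov (fun A => f (ind A)) (fun i => φf (x i))) :=
  stmt14_general I hI1 hIpos f hnc
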